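/- Let (L, R) be an AWFS on C. The following are equivalent: (1) the forgetful functor from L-coalgebras to C^2 is fully faithful; (2) the comonad L is idempotent; (3) for every L-coalgebra f̂ : A → B, the square (f, 1_B) : f → 1_B underlies a coalgebra map from f̂ to the unique coalgebra structure on 1_B; (4) the forgetful functor from R-algebras to C^2 is fully faithful; (5) the monad R is idempotent; (6) liftings of L-coalgebras against R-algebras are unique. -/

import Mathlib

open CategoryTheory

universe v u

/-- A functorial factorisation on `C`. -/
structure FunctorialFactorisation (C : Type u) [Category.{v} C] where
  E : Arrow C ⥤ C
  l : Arrow.leftFunc ⟶ E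
  r : E ⟶ Arrow.rightFunc
  fac : ∀ f : Arrow C, l.app f ≫ r.app f = f.hom

namespace FunctorialFactorisation

variable {C : Type u} [Category.{v} C] (ff : FunctorialFactorisation C)

/-- The counit square `ε_f = (1, ρ f) : λ f → f`. -/
def εhom (f : Arrow C) : Arrow.mk (ff.l.app f) ⟶ f :=
  Arrow.homMk (u := 𝟙 f.left) (v := ff.r.app f) ((Category.id_comp _).trans (ff.fac f).symm)

/-- The unit square `η_f = (λ f, 1) : f → ρ f`. -/
def ηhom (f : Arrow C) : f ⟶ Arrow.mk (ff.r.app f) :=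
  Arrow.homMk (u := ff.l.app f) (v := 𝟙 f.right) ((ff.fac f).trans (Category.comp_id _).symm)

end FunctorialFactorisation

/-- An algebraic weak factorisation system on `C`: a functorial factorisation `(λ, E, ρ)`
together with an extension of `(L, ε)` to a comonad over the domain functor, an extension of
`(R, η)` to a monad over the codomain functor, and a distributive law of the comonad over the
monad (with prescribed domain/codomain components).  Since the comultiplication and
multiplication squares have one identity component, all the data is in the maps
`comul f : E f ⟶ E (λ f)` and `mul f : E (ρ f) ⟶ E f`. -/
structure AWFS (C : Type u) [Category.{v} C] where
  ff : FunctorialFactorisation C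
  comul : ∀ f : Arrow C, ff.E.obj f ⟶ ff.E.obj (Arrow.mk (ff.l.app f))
  mul : ∀ f : Arrow C, ff.E.obj (Arrow.mk (ff.r.app f)) ⟶ ff.E.obj f
  comul_w : ∀ f : Arrow C, ff.l.app f ≫ comul f = ff.l.app (Arrow.mk (ff.l.app f))
  mul_w : ∀ f : Arrow C, mul f ≫ ff.r.app f = ff.r.app (Arrow.mk (ff.r.app f))
  comul_counit : ∀ f : Arrow C,
    comul f ≫ ff.r.app (Arrow.mk (ff.l.app f)) = 𝟙 (ff.E.obj f)
  comul_counit' : ∀ f : Arrow C, comul f ≫ ff.E.map (ff.εhom f) = 𝟙 (ff.E.obj f)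
  mul_unit : ∀ f : Arrow C, ff.l.app (Arrow.mk (ff.r.app f)) ≫ mul f = 𝟙 (ff.E.obj f)
  mul_unit' : ∀ f : Arrow C, ff.E.map (ff.ηhom f) ≫ mul f = 𝟙 (ff.E.obj f)
  comul_coassoc : ∀ f : Arrow C,
    comul f ≫ comul (Arrow.mk (ff.l.app f)) =
      comul f ≫ ff.E.map (Arrow.homMk (u := 𝟙 f.left) (v := comul f)
        ((Category.id_comp _).trans (comul_w f).symm) :
          Arrow.mk (ff.l.app f) ⟶ Arrow.mk (ff.l.app (Arrow.mk (ff.l.app f))))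
  mul_assoc : ∀ f : Arrow C,
    mul (Arrow.mk (ff.r.app f)) ≫ mul f =
      ff.E.map (Arrow.homMk (u := mul f) (v := 𝟙 f.right)
        ((mul_w f).trans (Category.comp_id _).symm) :
          Arrow.mk (ff.r.app (Arrow.mk (ff.r.app f))) ⟶ Arrow.mk (ff.r.app f)) ≫ mul f
  distrib : ∀ f : Arrow C,
    comul (Arrow.mk (ff.r.app f)) ≫
      ff.E.map (Arrow.homMk (u := comul f) (v := mul f)
        ((comul_counit f).trans (mul_unit f).symm) :
          Arrow.mk (ff.l.app (Arrow.mk (ff.r.app f))) ⟶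
            Arrow.mk (ff.r.app (Arrow.mk (ff.l.app f)))) ≫
      mul (Arrow.mk (ff.l.app f)) = mul f ≫ comul f

namespace AWFS

variable {C : Type u} [Category.{v} C] (A : AWFS C)

/-- A coalgebra for the comonad `L` of an AWFS: since `L` is a comonad over the domain
functor, a coalgebra structure on `f : A ⟶ B` is a single map `s : B ⟶ E f`. -/
structure Coalgebra (f : Arrow C) where
  s : f.right ⟶ A.ff.E.obj f
  w : f.hom ≫ s = A.ff.l.app f
  counit : s ≫ A.ff.r.app f = 𝟙 f.right
  coassoc : s ≫ A.comul f =
    s ≫ A.ff.E.map (Arrow.homMk (u := 𝟙 f.left) (v := s)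
      ((Category.id_comp _).trans w.symm) : f ⟶ Arrow.mk (A.ff.l.app f))

/-- An algebra for the monad `R` of an AWFS: since `R` is a monad over the codomain
functor, an algebra structure on `g : C ⟶ D` is a single map `p : E g ⟶ C`. -/
structure Algebra (g : Arrow C) where
  p : A.ff.E.obj g ⟶ g.left
  w : p ≫ g.hom = A.ff.r.app g
  unit : A.ff.l.app g ≫ p = 𝟙 g.left
  assoc : A.mul g ≫ p =
    A.ff.E.map (Arrow.homMk (u := p) (v := 𝟙 g.right)
      (w.trans (Category.comp_id _).symm) : Arrow.mk (A.ff.r.app g) ⟶ g) ≫ p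

/-- The canonical diagonal filler of an `L`-coalgebra against an `R`-algebra. -/
def fill {f g : Arrow C} (cf : A.Coalgebra f) (ag : A.Algebra g) (sq : f ⟶ g) :
    f.right ⟶ g.left :=
  cf.s ≫ A.ff.E.map sq ≫ ag.p

end AWFS

/-!
Canonical lifts are natural in coalgebra maps and in algebra maps, and the canonical lift of the
coalgebra `1_B` (resp. against the algebra `1_C`) along a square is its top (resp. bottom) edge.
A lift `j` of a square `(u, v) : f ⟶ g` factors it as `(f, 1) : f ⟶ 1_B` followed by
`(j, v) : 1_B ⟶ g`, so once `(f, 1)` is a coalgebra map every lift is the canonical one; dually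
through `1_C`.
Conversely, both `1` and `ρ (λ f) ≫ comul f` lift the square `(λ (λ f), ρ (λ f))` from a cofree
coalgebra to a free algebra, so unique lifts make `comul` invertible (dually `mul`). Finally, if
`comul f` is invertible then `E` of the square `(1, s) : f ⟶ λ f` is `comul f`, and naturality of
`ρ` shows that any coalgebra structure `s` on `f` is inverse to `ρ f`, which makes every square
a coalgebra map.
-/

namespace CategoryTheory.Arrow

variable {C : Type u} [Category.{v} C]

def toIdRight (f : Arrow C) : f ⟶ Arrow.mk (𝟙 f.right) :=
  homMk (u := f.hom) (v := 𝟙 f.right)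

def fromIdLeft (g : Arrow C) : Arrow.mk (𝟙 g.left) ⟶ g :=
  homMk (u := 𝟙 g.left) (v := g.hom)

def IsLift {f g : Arrow C} (sq : f ⟶ g) (j : f.right ⟶ g.left) : Prop :=
  f.hom ≫ j = sq.left ∧ j ≫ g.hom = sq.right

variable {f g : Arrow C} {sq : f ⟶ g} {j : f.right ⟶ g.left}

lemma IsLift.eq_toIdRight_comp (hj : IsLift sq j) :
    sq = toIdRight f ≫ (homMk (u := j) (v := sq.right) (hj.2.trans (Category.id_comp _).symm) :
      Arrow.mk (𝟙 f.right) ⟶ g) := by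
  ext
  · simp [toIdRight, hj.1]
  · simp [toIdRight]

lemma IsLift.eq_comp_fromIdLeft (hj : IsLift sq j) :
    sq = (homMk (u := sq.left) (v := j) ((Category.comp_id _).trans hj.1.symm) :
      f ⟶ Arrow.mk (𝟙 g.left)) ≫ fromIdLeft g := by
  ext
  · simp [fromIdLeft]
  · simp [fromIdLeft, hj.2]

end CategoryTheory.Arrow

namespace AWFS

open Arrow

variable {C : Type u} [Category.{v} C] (A : AWFS C)

lemma l_naturality {f g : Arrow C} (sq : f ⟶ g) :
    sq.left ≫ A.ff.l.app g = A.ff.l.app f ≫ A.ff.E.map sq :=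
  A.ff.l.naturality sq

lemma r_naturality {f g : Arrow C} (sq : f ⟶ g) :
    A.ff.E.map sq ≫ A.ff.r.app g = A.ff.r.app f ≫ sq.right :=
  A.ff.r.naturality sq

def IsCoalgebraHom {f f' : Arrow C} (cf : A.Coalgebra f) (cf' : A.Coalgebra f') (sq : f ⟶ f') :
    Prop :=
  cf.s ≫ A.ff.E.map sq = sq.right ≫ cf'.s

def IsAlgebraHom {g g' : Arrow C} (ag : A.Algebra g) (ag' : A.Algebra g') (sq : g ⟶ g') : Prop :=
  ag.p ≫ sq.left = A.ff.E.map sq ≫ ag'.p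

def idCoalgebra (X : C) : A.Coalgebra (Arrow.mk (𝟙 X)) where
  s := A.ff.l.app (Arrow.mk (𝟙 X))
  w := Category.id_comp _
  counit := A.ff.fac _
  coassoc := by
    erw [A.comul_w]
    exact (Category.id_comp _).symm.trans (A.l_naturality
      (homMk (u := 𝟙 X) (v := A.ff.l.app (Arrow.mk (𝟙 X))) rfl :
        Arrow.mk (𝟙 X) ⟶ Arrow.mk (A.ff.l.app (Arrow.mk (𝟙 X)))))

def idAlgebra (X : C) : A.Algebra (Arrow.mk (𝟙 X)) where
  p := A.ff.r.app (Arrow.mk (𝟙 X))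
  w := Category.comp_id _
  unit := A.ff.fac _
  assoc := by
    erw [A.mul_w]
    exact ((A.r_naturality
      (homMk (u := A.ff.r.app (Arrow.mk (𝟙 X))) (v := 𝟙 X) rfl :
        Arrow.mk (A.ff.r.app (Arrow.mk (𝟙 X))) ⟶ Arrow.mk (𝟙 X))).trans (Category.comp_id _)).symm

def cofreeCoalgebra (f : Arrow C) : A.Coalgebra (Arrow.mk (A.ff.l.app f)) where
  s := A.comul f
  w := A.comul_w f
  counit := A.comul_counit f
  coassoc := A.comul_coassoc f

def freeAlgebra (f : Arrow C) : A.Algebra (Arrow.mk (A.ff.r.app f)) where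
  p := A.mul f
  w := A.mul_w f
  unit := A.mul_unit f
  assoc := A.mul_assoc f

variable {A}

lemma fill_comp_of_isCoalgebraHom {f f' g : Arrow C} {cf : A.Coalgebra f}
    {cf' : A.Coalgebra f'} {α : f ⟶ f'} (hα : A.IsCoalgebraHom cf cf' α) (ag : A.Algebra g)
    (β : f' ⟶ g) : A.fill cf ag (α ≫ β) = α.right ≫ A.fill cf' ag β := by
  simp only [fill, Functor.map_comp, ← Category.assoc]
  rw [hα]

lemma fill_comp_of_isAlgebraHom {f g g' : Arrow C} {ag : A.Algebra g} {ag' : A.Algebra g'}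
    {β : g ⟶ g'} (hβ : A.IsAlgebraHom ag ag' β) (cf : A.Coalgebra f) (α : f ⟶ g) :
    A.fill cf ag' (α ≫ β) = A.fill cf ag α ≫ β.left := by
  simp only [fill, Functor.map_comp, Category.assoc]
  rw [← hβ]

variable (A)

lemma fill_idCoalgebra (X : C) {g : Arrow C} (ag : A.Algebra g) (γ : Arrow.mk (𝟙 X) ⟶ g) :
    A.fill (A.idCoalgebra X) ag γ = γ.left := by
  change A.ff.l.app _ ≫ A.ff.E.map γ ≫ ag.p = γ.left
  rw [← Category.assoc, ← A.l_naturality]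
  exact (Category.assoc _ _ _).trans ((whisker_eq _ ag.unit).trans (Category.comp_id _))

lemma fill_idAlgebra (Y : C) {f : Arrow C} (cf : A.Coalgebra f) (γ : f ⟶ Arrow.mk (𝟙 Y)) :
    A.fill cf (A.idAlgebra Y) γ = γ.right := by
  change cf.s ≫ A.ff.E.map γ ≫ A.ff.r.app _ = γ.right
  rw [A.r_naturality]
  exact (Category.assoc _ _ _).symm.trans ((eq_whisker cf.counit _).trans (Category.id_comp _))

lemma eq_fill_of_isCoalgebraHom_toIdRight {f g : Arrow C} {cf : A.Coalgebra f}
    (h : A.IsCoalgebraHom cf (A.idCoalgebra f.right) (toIdRight f)) (ag : A.Algebra g)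
    {sq : f ⟶ g} {j : f.right ⟶ g.left} (hj : IsLift sq j) : j = A.fill cf ag sq := by
  rw [hj.eq_toIdRight_comp, fill_comp_of_isCoalgebraHom h, fill_idCoalgebra]
  exact (Category.id_comp _).symm

lemma eq_fill_of_isAlgebraHom_fromIdLeft {f g : Arrow C} {ag : A.Algebra g}
    (h : A.IsAlgebraHom (A.idAlgebra g.left) ag (fromIdLeft g)) (cf : A.Coalgebra f)
    {sq : f ⟶ g} {j : f.right ⟶ g.left} (hj : IsLift sq j) : j = A.fill cf ag sq := by
  rw [hj.eq_comp_fromIdLeft, fill_comp_of_isAlgebraHom h, fill_idAlgebra]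
  exact (Category.comp_id _).symm

lemma r_app_comp_s_of_isIso_comul {f : Arrow C} [IsIso (A.comul f)] (cf : A.Coalgebra f) :
    A.ff.r.app f ≫ cf.s = 𝟙 (A.ff.E.obj f) := by
  let σ : f ⟶ Arrow.mk (A.ff.l.app f) :=
    homMk (u := 𝟙 f.left) (v := cf.s) ((Category.id_comp _).trans cf.w.symm)
  have hσε : σ ≫ A.ff.εhom f = 𝟙 f := by
    ext
    · exact Category.id_comp _
    · exact cf.counit
  have hεδ : A.ff.E.map (A.ff.εhom f) ≫ A.comul f = 𝟙 _ := by
    rw [← IsIso.inv_eq_of_hom_inv_id (A.comul_counit' f), IsIso.inv_hom_id]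
  have hσ : A.ff.E.map σ = A.comul f := by
    rw [← Category.id_comp (A.comul f), ← A.ff.E.map_id, ← hσε, Functor.map_comp,
      Category.assoc, hεδ, Category.comp_id]
  have := A.r_naturality σ
  rw [hσ, A.comul_counit] at this
  exact this.symm

lemma l_app_comp_p_of_isIso_mul {g : Arrow C} [IsIso (A.mul g)] (ag : A.Algebra g) :
    ag.p ≫ A.ff.l.app g = 𝟙 (A.ff.E.obj g) := by
  let π : Arrow.mk (A.ff.r.app g) ⟶ g :=
    homMk (u := ag.p) (v := 𝟙 g.right) (ag.w.trans (Category.comp_id _).symm)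
  have hηπ : A.ff.ηhom g ≫ π = 𝟙 g := by
    ext
    · exact ag.unit
    · exact Category.id_comp _
  have hμη : A.mul g ≫ A.ff.E.map (A.ff.ηhom g) = 𝟙 _ := by
    rw [← IsIso.inv_eq_of_inv_hom_id (A.mul_unit' g), IsIso.hom_inv_id]
  have hπ : A.ff.E.map π = A.mul g := by
    rw [← Category.comp_id (A.mul g), ← A.ff.E.map_id, ← hηπ, Functor.map_comp,
      ← Category.assoc, hμη, Category.id_comp]
  have := A.l_naturality π
  rw [hπ, A.mul_unit] at this
  exact this

lemma isCoalgebraHom_of_isIso_comul {f f' : Arrow C} [IsIso (A.comul f')] (cf : A.Coalgebra f)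
    (cf' : A.Coalgebra f') (sq : f ⟶ f') : A.IsCoalgebraHom cf cf' sq :=
  calc cf.s ≫ A.ff.E.map sq = cf.s ≫ A.ff.E.map sq ≫ A.ff.r.app f' ≫ cf'.s := by
        rw [A.r_app_comp_s_of_isIso_comul, Category.comp_id]
    _ = (cf.s ≫ A.ff.r.app f) ≫ sq.right ≫ cf'.s := by
        erw [← Category.assoc (A.ff.E.map sq), A.r_naturality, Category.assoc, Category.assoc]
        rfl
    _ = sq.right ≫ cf'.s := (eq_whisker cf.counit _).trans (Category.id_comp _)

lemma isAlgebraHom_of_isIso_mul {g g' : Arrow C} [IsIso (A.mul g)] (ag : A.Algebra g)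
    (ag' : A.Algebra g') (sq : g ⟶ g') : A.IsAlgebraHom ag ag' sq :=
  calc ag.p ≫ sq.left = ag.p ≫ sq.left ≫ A.ff.l.app g' ≫ ag'.p := by
        erw [ag'.unit, Category.comp_id]
    _ = (ag.p ≫ A.ff.l.app g) ≫ A.ff.E.map sq ≫ ag'.p := by
        erw [← Category.assoc sq.left, A.l_naturality, Category.assoc, Category.assoc]
    _ = A.ff.E.map sq ≫ ag'.p := by rw [A.l_app_comp_p_of_isIso_mul, Category.id_comp]

def factorSquare (f : Arrow C) : Arrow.mk (A.ff.l.app f) ⟶ Arrow.mk (A.ff.r.app f) :=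
  homMk (u := A.ff.l.app f) (v := A.ff.r.app f) rfl

lemma isLift_id_factorSquare (f : Arrow C) : IsLift (A.factorSquare f) (𝟙 _) :=
  ⟨Category.comp_id _, Category.id_comp _⟩

lemma isLift_r_app_comp_comul (f : Arrow C) :
    IsLift (A.factorSquare (Arrow.mk (A.ff.l.app f)))
      (A.ff.r.app (Arrow.mk (A.ff.l.app f)) ≫ A.comul f) := by
  constructor
  · erw [← Category.assoc, A.ff.fac]
    exact A.comul_w f
  · erw [Category.assoc, A.comul_counit, Category.comp_id]
    rfl

lemma isLift_mul_comp_l_app (f : Arrow C) :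
    IsLift (A.factorSquare (Arrow.mk (A.ff.r.app f)))
      (A.mul f ≫ A.ff.l.app (Arrow.mk (A.ff.r.app f))) := by
  constructor
  · erw [← Category.assoc, A.mul_unit, Category.id_comp]
    rfl
  · erw [Category.assoc, A.ff.fac]
    exact A.mul_w f

lemma isIso_comul_of_isLift_eq (f : Arrow C)
    (h : ∀ j j', IsLift (A.factorSquare (Arrow.mk (A.ff.l.app f))) j →
      IsLift (A.factorSquare (Arrow.mk (A.ff.l.app f))) j' → j = j') :
    IsIso (A.comul f) :=
  ⟨_, A.comul_counit f, h _ _ (A.isLift_r_app_comp_comul f) (A.isLift_id_factorSquare _)⟩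

lemma isIso_mul_of_isLift_eq (f : Arrow C)
    (h : ∀ j j', IsLift (A.factorSquare (Arrow.mk (A.ff.r.app f))) j →
      IsLift (A.factorSquare (Arrow.mk (A.ff.r.app f))) j' → j = j') :
    IsIso (A.mul f) :=
  ⟨_, h _ _ (A.isLift_mul_comp_l_app f) (A.isLift_id_factorSquare _), A.mul_unit f⟩

end AWFS

/-- For an AWFS `(L, R)` on `C`, the following are equivalent: (1) the forgetful functor
from `L`-coalgebras to `C²` is fully faithful (every square between coalgebras is a
coalgebra map); (2) the comonad `L` is idempotent (its comultiplication is invertible);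
(3) for every `L`-coalgebra `f̂ : A → B` the square `(f, 1) : f → 1_B` is a coalgebra map
into the coalgebra structure on `1_B`; (4) the forgetful functor from `R`-algebras to `C²`
is fully faithful; (5) the monad `R` is idempotent; (6) liftings of `L`-coalgebras against
`R`-algebras are unique. -/
theorem AWFS.orthogonal_tfae {C : Type u} [Category.{v} C] (A : AWFS C) :
    List.TFAE
      [ ∀ (f f' : Arrow C) (cf : A.Coalgebra f) (cf' : A.Coalgebra f') (sq : f ⟶ f'),
          cf.s ≫ A.ff.E.map sq = sq.right ≫ cf'.s,
        ∀ f : Arrow C, IsIso (A.comul f),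
        ∀ (f : Arrow C) (cf : A.Coalgebra f) (c1 : A.Coalgebra (Arrow.mk (𝟙 f.right))),
          cf.s ≫ A.ff.E.map (Arrow.homMk (u := f.hom) (v := 𝟙 f.right) (by simp) :
              f ⟶ Arrow.mk (𝟙 f.right)) = 𝟙 f.right ≫ c1.s,
        ∀ (g g' : Arrow C) (ag : A.Algebra g) (ag' : A.Algebra g') (sq : g ⟶ g'),
          ag.p ≫ sq.left = A.ff.E.map sq ≫ ag'.p,
        ∀ f : Arrow C, IsIso (A.mul f),
        ∀ (f g : Arrow C) (_ : A.Coalgebra f) (_ : A.Algebra g) (sq : f ⟶ g)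
            (j j' : f.right ⟶ g.left),
          f.hom ≫ j = sq.left → j ≫ g.hom = sq.right →
          f.hom ≫ j' = sq.left → j' ≫ g.hom = sq.right → j = j' ] := by
  tfae_have 1 → 3 := fun h f cf c1 => h f _ cf c1 _
  tfae_have 3 → 6 := fun h f _ cf ag _ j j' hj₁ hj₂ hj₁' hj₂' =>
    (A.eq_fill_of_isCoalgebraHom_toIdRight (h f cf _) ag ⟨hj₁, hj₂⟩).trans
      (A.eq_fill_of_isCoalgebraHom_toIdRight (h f cf _) ag ⟨hj₁', hj₂'⟩).symm
  tfae_have 6 → 2 := fun h f => A.isIso_comul_of_isLift_eq f fun j j' hj hj' =>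
    h _ _ (A.cofreeCoalgebra _) (A.freeAlgebra _) _ j j' hj.1 hj.2 hj'.1 hj'.2
  tfae_have 2 → 1 := fun h _ f' cf cf' sq =>
    have := h f'
    A.isCoalgebraHom_of_isIso_comul cf cf' sq
  tfae_have 4 → 6 := fun h _ g cf ag _ j j' hj₁ hj₂ hj₁' hj₂' =>
    (A.eq_fill_of_isAlgebraHom_fromIdLeft (h _ g _ ag _) cf ⟨hj₁, hj₂⟩).trans
      (A.eq_fill_of_isAlgebraHom_fromIdLeft (h _ g _ ag _) cf ⟨hj₁', hj₂'⟩).symm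
  tfae_have 6 → 5 := fun h f => A.isIso_mul_of_isLift_eq f fun j j' hj hj' =>
    h _ _ (A.cofreeCoalgebra _) (A.freeAlgebra _) _ j j' hj.1 hj.2 hj'.1 hj'.2
  tfae_have 5 → 4 := fun h g _ ag ag' sq =>
    have := h g
    A.isAlgebraHom_of_isIso_mul ag ag' sq
  tfae_finish
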